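/- arXiv:1005.1475 — 2 statements merged into one kernel-verified Lean document; each statement's English description precedes it below -/
import Mathlib

section
/- Let (U, ⊕, ⊗) be a rational tropical algebra. Then for all x, y, α, β in U, α ⊕ (β ⊗ x ⊗ y) = α ⊕ (β ⊗ (α ⊕ x) ⊗ y). (Insertion property) -/
/-- A rational tropical algebra: two associative operations ⊕ (plus) and
⊗ (times), ⊗ distributes over ⊕ on both sides, and the rationality
identity x ⊕ (y ⊗ x ⊗ z) = x holds. -/
structure RationalTropicalAlgebra (U : Type*) where
  plus : U → U → U
  times : U → U → U
  plus_assoc : ∀ a b c, plus a (plus b c) = plus (plus a b) c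
  times_assoc : ∀ a b c, times a (times b c) = times (times a b) c
  left_distrib : ∀ a b c, times a (plus b c) = plus (times a b) (times a c)
  right_distrib : ∀ a b c, times (plus a b) c = plus (times a c) (times b c)
  rationality : ∀ x y z, plus x (times (times y x) z) = x

/-- Insertion property. -/
theorem insertion_property {U : Type*} (A : RationalTropicalAlgebra U)
    (x y α β : U) :
    A.plus α (A.times (A.times β x) y) =
      A.plus α (A.times (A.times β (A.plus α x)) y) :=
  calc A.plus α (A.times (A.times β x) y)
      = A.plus (A.plus α (A.times (A.times β α) y)) (A.times (A.times β x) y) := by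
        rw [A.rationality]
    _ = A.plus α (A.times (A.times β (A.plus α x)) y) := by
        rw [A.left_distrib, A.right_distrib, A.plus_assoc]
end

section
/- Let (U, ⊕, ⊗) be a rational tropical algebra. Then for all α, β, v₀, v₁, v₂ ∈ U, α ⊕ (β ⊗ v₀ ⊗ v₁) ⊕ v₂ = α ⊕ (β ⊗ (α ⊕ v₀) ⊗ v₁) ⊕ v₂. (Semantic content of the tropical P-will simulation lemma: transferring the player's accumulated value α two levels down into a grandchild player node does not change the evaluated game value.) -/
namespace RationalTropicalAlgebra

variable {U : Type*} (A : RationalTropicalAlgebra U)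

theorem plus_times_times_plus_self (x y w z : U) :
    A.plus x (A.times (A.times y (A.plus x w)) z) = A.plus x (A.times (A.times y w) z) :=
  calc A.plus x (A.times (A.times y (A.plus x w)) z)
      = A.plus (A.plus x (A.times (A.times y x) z)) (A.times (A.times y w) z) := by
        rw [A.left_distrib, A.right_distrib, A.plus_assoc]
    _ = A.plus x (A.times (A.times y w) z) := by rw [A.rationality]

end RationalTropicalAlgebra

/-- Semantic content of the tropical P-will simulation lemma. -/
theorem tropical_will {U : Type*} (A : RationalTropicalAlgebra U)
    (α β v₀ v₁ v₂ : U) :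
    A.plus (A.plus α (A.times (A.times β v₀) v₁)) v₂ =
      A.plus (A.plus α (A.times (A.times β (A.plus α v₀)) v₁)) v₂ := by
  rw [A.plus_times_times_plus_self]
end
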